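/- The maps φ_{(c,s)} compose according to the law φ_{(c₁,s₁)} ∘ φ_{(c₂,s₂)} = φ_{(c₁+c₂, s₁+s₂ − 2 Im((c̄₁ + βc₁)c₂))}. -/

import Mathlib

open Complex

/-- The affine map `φ_{(c,s)}`. -/
noncomputable def phiCS (β : ℝ) (c : ℂ) (s : ℝ) (ζ : ℂ × ℂ) : ℂ × ℂ :=
  (ζ.1 + c,
    ζ.2 + 2 * Complex.I * ((starRingEnd ℂ) c + β * c) * ζ.1
      + Complex.I * (‖c‖ ^ 2 + β * (c ^ 2).re) + s)

/-! The form `B(c, d) = (c̄ + βc) d` is real-bilinear with symmetric real part, and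
`‖c‖² + β Re(c²) = Re B(c, c)`. Polarization gives the constant term of `φ_{(c₁+c₂, ·)}` as
the sum of those of `φ_{(c₁, ·)}` and `φ_{(c₂, ·)}` plus `2i Re B(c₁, c₂)`, while composing
produces `2i B(c₁, c₂)`; the difference `-2 Im B(c₁, c₂)` is absorbed in the `s`-parameter. -/

theorem Complex.norm_sq_add_mul_re_sq_add (β : ℝ) (c d : ℂ) :
    ‖c + d‖ ^ 2 + β * ((c + d) ^ 2).re =
      (‖c‖ ^ 2 + β * (c ^ 2).re) + (‖d‖ ^ 2 + β * (d ^ 2).re)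
        + 2 * ((starRingEnd ℂ c + β * c) * d).re := by
  simp only [Complex.sq_norm, normSq_apply]
  simp only [sq, mul_re, mul_im, add_re, add_im, conj_re, conj_im, ofReal_re, ofReal_im]
  ring

theorem Complex.I_mul_eq_I_mul_re_sub_im (z : ℂ) : I * z = I * z.re - z.im := by
  conv_lhs => rw [← re_add_im z]
  linear_combination (z.im : ℂ) * I_sq

theorem phiCS_comp (β : ℝ)
    (c₁ c₂ : ℂ) (s₁ s₂ : ℝ) :
    phiCS β c₁ s₁ ∘ phiCS β c₂ s₂ =
      phiCS β (c₁ + c₂) (s₁ + s₂ - 2 * (((starRingEnd ℂ) c₁ + β * c₁) * c₂).im) := by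
  funext ζ
  simp only [Function.comp, phiCS, Prod.mk.injEq]
  refine ⟨by ring, ?_⟩
  have hq := congrArg ((↑) : ℝ → ℂ) (Complex.norm_sq_add_mul_re_sq_add β c₁ c₂)
  push_cast [map_add] at hq ⊢
  linear_combination
    2 * Complex.I_mul_eq_I_mul_re_sub_im ((starRingEnd ℂ c₁ + β * c₁) * c₂) - I * hq
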